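/- arXiv:2203.10319 — 4 statements merged into one kernel-verified Lean document; each statement's English description precedes it below -/
import Mathlib

section
/- Let $\mathcal{A}(X) = X\left(\tfrac{3}{2}I_s - \tfrac{1}{2}X^\top X\right)$ on $\mathbb{R}^{m\times s}$ and let $X$ satisfy $X^\top X = I_s$. Then for every direction $D\in\mathbb{R}^{m\times s}$, the derivative of the map $X\mapsto \mathcal{A}(X)^\top \mathcal{A}(X) - I_s$ at $X$ in direction $D$ is zero. -/
/-!
Writing `E = YᵀY - 1` for the constraint residual, `𝒜(Y) = Y (1 - E/2)` and `E` is symmetric, so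
`𝒜(Y)ᵀ𝒜(Y) - 1 = (1 - E/2)(1 + E)(1 - E/2) - 1 = ¼ E²(E - 3)`: the residual after applying `𝒜`
is quadratic in the residual before. Along `X + tD` with `XᵀX = 1` the residual is `t • M(t)`
with `M` polynomial, so every entry of the constraint is `t²` times a polynomial in `t`.
-/

open Matrix

/-- The constraint dissolving operator for the Stiefel manifold:
`𝒜(X) = X (3/2 Iₛ - 1/2 XᵀX)`. -/
noncomputable def stiefelCDO {m s : ℕ} (X : Matrix (Fin m) (Fin s) ℝ) : Matrix (Fin m) (Fin s) ℝ :=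
  X * ((3 / 2 : ℝ) • (1 : Matrix (Fin s) (Fin s) ℝ) - (1 / 2 : ℝ) • (Xᵀ * X))

theorem Matrix.transpose_mul_self_add_smul {m n R : Type*} [Fintype m] [CommRing R]
    (X D : Matrix m n R) (t : R) :
    (X + t • D)ᵀ * (X + t • D) = Xᵀ * X + t • (Xᵀ * D + Dᵀ * X + t • (Dᵀ * D)) := by
  simp only [transpose_add, transpose_smul, Matrix.add_mul, Matrix.mul_add, Matrix.smul_mul,
    Matrix.mul_smul, smul_add]
  abel

theorem stiefelCDO_eq_mul_one_sub {m s : ℕ} (Y : Matrix (Fin m) (Fin s) ℝ) :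
    stiefelCDO Y = Y * (1 - (1 / 2 : ℝ) • (Yᵀ * Y - 1)) := by
  rw [stiefelCDO, smul_sub]
  congr 1
  module

theorem stiefelCDO_transpose_mul_self_sub_one {m s : ℕ} (Y : Matrix (Fin m) (Fin s) ℝ) :
    (stiefelCDO Y)ᵀ * stiefelCDO Y - 1 =
      (1 / 4 : ℝ) • ((Yᵀ * Y - 1) ^ 2 * (Yᵀ * Y - 1 - 3)) := by
  set E := Yᵀ * Y - 1 with hE
  have hE_symm : Eᵀ = E := by simp [hE]
  have hG : Yᵀ * Y = 1 + E := by rw [hE, add_sub_cancel]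
  have h3 : (3 : Matrix (Fin s) (Fin s) ℝ) = (3 : ℝ) • 1 := by
    rw [ofNat_smul_eq_nsmul, nsmul_one]
    rfl
  rw [stiefelCDO_eq_mul_one_sub, ← hE, transpose_mul, transpose_sub, transpose_smul,
    transpose_one, hE_symm, Matrix.mul_assoc, ← Matrix.mul_assoc Yᵀ, hG, h3]
  simp only [sq, mul_sub, sub_mul, mul_add, add_mul, smul_mul_assoc, mul_smul_comm, one_mul,
    mul_one, Matrix.mul_assoc]
  module

theorem deriv_sq_mul_eq_zero {g : ℝ → ℝ} (hg : DifferentiableAt ℝ g 0) :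
    deriv (fun t => t ^ 2 * g t) 0 = 0 := by
  simpa using ((hasDerivAt_pow 2 (0 : ℝ)).fun_mul hg.hasDerivAt).deriv

/-- on the Stiefel manifold, the derivative of
`X ↦ 𝒜(X)ᵀ𝒜(X) - Iₛ` in any direction `D` vanishes, i.e.
`d/dt |_{t=0} (𝒜(X+tD)ᵀ𝒜(X+tD) - Iₛ) = 0` entrywise. -/
theorem stiefelCDO_constraint_derivative_vanishes {m s : ℕ}
    (X : Matrix (Fin m) (Fin s) ℝ) (hX : Xᵀ * X = 1) :
    ∀ D : Matrix (Fin m) (Fin s) ℝ, ∀ i j : Fin s,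
      deriv (fun t : ℝ =>
        (((stiefelCDO (X + t • D))ᵀ * stiefelCDO (X + t • D) - 1 :
          Matrix (Fin s) (Fin s) ℝ)) i j) 0 = 0 := by
  intro D i j
  set M : ℝ → Matrix (Fin s) (Fin s) ℝ := fun t => Xᵀ * D + Dᵀ * X + t • (Dᵀ * D)
  have hresidual (t : ℝ) : (X + t • D)ᵀ * (X + t • D) - 1 = t • M t := by
    rw [transpose_mul_self_add_smul, hX, add_sub_cancel_left]
  have hfactor (t : ℝ) : (stiefelCDO (X + t • D))ᵀ * stiefelCDO (X + t • D) - 1 =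
      t ^ 2 • ((1 / 4 : ℝ) • (M t ^ 2 * (t • M t - 3))) := by
    rw [stiefelCDO_transpose_mul_self_sub_one, hresidual, smul_pow, smul_mul_assoc, smul_comm]
  have hpoly : Differentiable ℝ fun t =>
      ((1 / 4 : ℝ) • (M t ^ 2 * (t • M t - 3)) : Matrix (Fin s) (Fin s) ℝ) i j := by
    simp only [M, sq, Matrix.smul_apply, Matrix.mul_apply, Matrix.sub_apply, Matrix.add_apply]
    fun_prop
  simp only [hfactor, Matrix.smul_apply, smul_eq_mul]
  exact deriv_sq_mul_eq_zero (hpoly 0)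
end

section
/- Under the setting of the constraint dissolving operator on a smooth embedded manifold (Assumptions: $\mathcal{A}$ locally Lipschitz smooth, $\mathcal{A}(z)=z$ on $\mathcal{M}$, $J_{\mathcal{A}}(x)J_c(x)=0$ on $\mathcal{M}$, LICQ holds), for any $x\in\mathcal{M}$: $J_{\mathcal{A}}(x)d = 0$ if and only if $d \in \mathrm{range}(J_c(x))$. -/
/-!
The implicit function theorem (applicable by LICQ) shows that every vector of
`T_x = ker J_c(x)ᵀ` lies in the tangent cone of `ℳ` at `x`; since `𝒜` is the identity on `ℳ`,
`J_𝒜(x)ᵀ` fixes `T_x`, so `rank J_𝒜(x) ≥ n - rank J_c(x)`. As `J_𝒜(x) J_c(x) = 0`, the range of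
`J_c(x)` lies in the kernel of `J_𝒜(x)`, and counting dimensions gives equality.
-/

open Matrix Topology

theorem Matrix.ker_mulVecLin_eq_range_of_mul_eq_zero {K m n : Type*} [Field K] [Fintype m]
    [Fintype n] {P : Matrix m m K} {Q : Matrix m n K} (hPQ : P * Q = 0)
    (hfix : ∀ v, Qᵀ *ᵥ v = 0 → Pᵀ *ᵥ v = v) :
    LinearMap.ker P.mulVecLin = LinearMap.range Q.mulVecLin := by
  have hrange_le : LinearMap.range Q.mulVecLin ≤ LinearMap.ker P.mulVecLin := by
    rw [LinearMap.range_le_ker_iff, ← Matrix.mulVecLin_mul, hPQ, Matrix.mulVecLin_zero]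
  have hker_le : LinearMap.ker Qᵀ.mulVecLin ≤ LinearMap.range Pᵀ.mulVecLin :=
    fun v hv ↦ ⟨v, hfix v hv⟩
  have hP : P.rank + Module.finrank K (LinearMap.ker P.mulVecLin) = Fintype.card m := by
    rw [Matrix.rank, LinearMap.finrank_range_add_finrank_ker, Module.finrank_fintype_fun_eq_card]
  have hQ : Q.rank + Module.finrank K (LinearMap.ker Qᵀ.mulVecLin) = Fintype.card m := by
    rw [← Q.rank_transpose, Matrix.rank, LinearMap.finrank_range_add_finrank_ker,
      Module.finrank_fintype_fun_eq_card]
  have hdim : Module.finrank K (LinearMap.ker Qᵀ.mulVecLin) ≤ P.rank := by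
    rw [← P.rank_transpose]
    exact Submodule.finrank_mono hker_le
  refine (Submodule.eq_of_le_of_finrank_le hrange_le ?_).symm
  rw [← Matrix.rank]
  omega

theorem Matrix.toLpLin_surjective_of_rank_eq {K m n : Type*} [Field K] [Fintype m]
    [Fintype n] [DecidableEq n] (p q : ENNReal) (M : Matrix m n K)
    (hM : M.rank = Fintype.card m) : Function.Surjective (Matrix.toLpLin p q M) := by
  have hrange : LinearMap.range M.mulVecLin = ⊤ := Submodule.eq_top_of_finrank_eq <| by
    rw [← Matrix.rank, hM, Module.finrank_fintype_fun_eq_card]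
  intro w
  obtain ⟨v, hv⟩ := LinearMap.range_eq_top.1 hrange w.ofLp
  exact ⟨WithLp.toLp p v, congrArg (WithLp.toLp q) hv⟩

section TangentCone

variable {𝕜 E : Type*} [NontriviallyNormedField 𝕜] [NormedAddCommGroup E] [NormedSpace 𝕜 E]

theorem HasStrictFDerivAt.ker_subset_tangentConeAt [CompleteSpace 𝕜] [CompleteSpace E]
    {F : Type*} [NormedAddCommGroup F] [NormedSpace 𝕜 F] [FiniteDimensional 𝕜 F] {f : E → F}
    {f' : E →L[𝕜] F} {a : E} (hf : HasStrictFDerivAt f f' a) (hf' : f'.range = ⊤) :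
    (f'.ker : Set E) ⊆ tangentConeAt 𝕜 (f ⁻¹' {f a}) a := by
  set ψ := hf.implicitFunction f f' hf' (f a)
  set U : Set f'.ker := {y | f (ψ y) = f a}
  have hU : U ∈ 𝓝 0 :=
    (Continuous.prodMk_right (f a)).continuousAt.preimage_mem_nhds (hf.map_implicitFunction_eq hf')
  have hψ : HasFDerivWithinAt ψ f'.ker.subtypeL U 0 :=
    (hf.to_implicitFunction hf').hasFDerivAt.hasFDerivWithinAt
  intro d hd
  have hmem := hψ.mapsTo_tangent_cone (by simp [tangentConeAt_of_mem_nhds hU] : ⟨d, hd⟩ ∈ _)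
  have hψ0 : ψ 0 = a := hf.implicitFunction_apply_image hf'
  rw [hψ0] at hmem
  exact tangentConeAt_mono (Set.image_subset_iff.2 fun y hy ↦ hy) hmem

theorem HasFDerivWithinAt.apply_eq_self_of_mem_tangentConeAt {A : E → E} {A' : E →L[𝕜] E}
    {s : Set E} {x d : E} (hA : HasFDerivWithinAt A A' s x) (hfix : ∀ z ∈ s, A z = z)
    (hx : x ∈ s) (hd : d ∈ tangentConeAt 𝕜 s x) : A' d = d :=
  hA.unique_on ((hasFDerivWithinAt_id x s).congr' hfix hx) hd

end TangentCone

theorem jacobian_nullspace_eq_range_Jc_general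
    {n p : ℕ} (c : EuclideanSpace ℝ (Fin n) → EuclideanSpace ℝ (Fin p))
    (hc : ContDiff ℝ 1 c)
    (A : EuclideanSpace ℝ (Fin n) → EuclideanSpace ℝ (Fin n))
    (hA : ContDiff ℝ 1 A)
    (Jc : EuclideanSpace ℝ (Fin n) → Matrix (Fin n) (Fin p) ℝ)
    (hJc : ∀ y (v : EuclideanSpace ℝ (Fin n)),
      fderiv ℝ c y v = Matrix.toEuclideanLin (Jc y)ᵀ v)
    (Ja : EuclideanSpace ℝ (Fin n) → Matrix (Fin n) (Fin n) ℝ)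
    (hJa : ∀ y (v : EuclideanSpace ℝ (Fin n)),
      fderiv ℝ A y v = Matrix.toEuclideanLin (Ja y)ᵀ v)
    (hfix : ∀ z, c z = 0 → A z = z)
    (hJaJc : ∀ z, c z = 0 → Ja z * Jc z = 0)
    (hLICQ : ∀ z, c z = 0 → (Jc z).rank = p)
    (x : EuclideanSpace ℝ (Fin n)) (hx : c x = 0) :
    ∀ d : Fin n → ℝ, (Ja x) *ᵥ d = 0 ↔ ∃ u : Fin p → ℝ, d = (Jc x) *ᵥ u := by
  have hsurj : (fderiv ℝ c x).range = ⊤ := LinearMap.range_eq_top.2 fun w ↦ by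
    obtain ⟨v, hv⟩ := Matrix.toLpLin_surjective_of_rank_eq 2 2 (Jc x)ᵀ
      (by rw [Matrix.rank_transpose, hLICQ x hx, Fintype.card_fin]) w
    exact ⟨v, (hJc x v).trans hv⟩
  have htangent : ∀ v, (Jc x)ᵀ *ᵥ v = 0 → (Ja x)ᵀ *ᵥ v = v := by
    intro v hv
    have hker : fderiv ℝ c x (WithLp.toLp 2 v) = 0 := by
      rw [hJc, Matrix.toLpLin_toLp, Matrix.toLin'_apply, hv, WithLp.toLp_zero]
    have hcone :=
      (hc.contDiffAt.hasStrictFDerivAt one_ne_zero).ker_subset_tangentConeAt hsurj hker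
    have hA' : HasFDerivWithinAt A (fderiv ℝ A x) (c ⁻¹' {c x}) x :=
      (hA.differentiable one_ne_zero x).hasFDerivAt.hasFDerivWithinAt
    have hfixed :=
      hA'.apply_eq_self_of_mem_tangentConeAt (fun z hz ↦ hfix z (hz.trans hx)) rfl hcone
    rw [hJa, Matrix.toLpLin_toLp, Matrix.toLin'_apply] at hfixed
    exact WithLp.toLp_injective 2 hfixed
  intro d
  rw [← Matrix.mulVecLin_apply, ← LinearMap.mem_ker,
    Matrix.ker_mulVecLin_eq_range_of_mul_eq_zero (hJaJc x hx) htangent]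
  simp only [LinearMap.mem_range, Matrix.mulVecLin_apply, eq_comm]

/-- under the blanket assumptions on the constraint dissolving
operator (`𝒜` locally Lipschitz smooth, `𝒜 = id` on `ℳ`, `J_𝒜 J_c = 0` on `ℳ`,
LICQ), for any `x ∈ ℳ`: `J_𝒜(x) d = 0` iff `d ∈ range(J_c(x))`. -/
theorem jacobian_nullspace_eq_range_Jc
    {n p : ℕ} (c : EuclideanSpace ℝ (Fin n) → EuclideanSpace ℝ (Fin p))
    (hc : ContDiff ℝ 1 c)
    (A : EuclideanSpace ℝ (Fin n) → EuclideanSpace ℝ (Fin n))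
    (hA : ContDiff ℝ 1 A)
    (hAlip : ∀ y, ∃ U ∈ nhds y, ∃ L : NNReal, LipschitzOnWith L (fderiv ℝ A) U)
    (Jc : EuclideanSpace ℝ (Fin n) → Matrix (Fin n) (Fin p) ℝ)
    (hJc : ∀ y (v : EuclideanSpace ℝ (Fin n)),
      fderiv ℝ c y v = Matrix.toEuclideanLin (Jc y)ᵀ v)
    (Ja : EuclideanSpace ℝ (Fin n) → Matrix (Fin n) (Fin n) ℝ)
    (hJa : ∀ y (v : EuclideanSpace ℝ (Fin n)),
      fderiv ℝ A y v = Matrix.toEuclideanLin (Ja y)ᵀ v)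
    (hfix : ∀ z, c z = 0 → A z = z)
    (hJaJc : ∀ z, c z = 0 → Ja z * Jc z = 0)
    (hLICQ : ∀ z, c z = 0 → (Jc z).rank = p)
    (x : EuclideanSpace ℝ (Fin n)) (hx : c x = 0) :
    ∀ d : Fin n → ℝ, (Ja x) *ᵥ d = 0 ↔ ∃ u : Fin p → ℝ, d = (Jc x) *ᵥ u :=
  jacobian_nullspace_eq_range_Jc_general c hc A hA Jc hJc Ja hJa hfix hJaJc hLICQ x hx
end

section
/- Let $x\in\mathcal{M}=\{y:c(y)=0\}$ be a first-order stationary point of $\min_{c(y)=0} f(y)$, i.e., there exists $\lambda\in\mathbb{R}^p$ with $\nabla f(x) = J_c(x)\lambda$ and $c(x)=0$. Suppose the constraint dissolving operator $\mathcal{A}$ satisfies $J_{\mathcal{A}}(x)J_c(x)=0$ and $\mathcal{A}(x)=x$. Then $x$ is a first-order stationary point of $h(y) = f(\mathcal{A}(y)) + \frac{\beta}{2}\|c(y)\|^2$, i.e., $\nabla h(x)=0$. -/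
/-! With the transposed-Jacobian convention of the statement the chain rule reads
`∇(f ∘ A)(x) = J_A(x) ∇f(A x)`, so `A x = x` and stationarity give
`∇(f ∘ A)(x) = J_A(x) J_c(x) λ = 0`, while the penalty `β/2 ‖c‖²` has zero derivative
wherever `c` vanishes. -/

open Matrix

theorem Matrix.inner_toEuclideanLin_transpose {m n : Type*} [Fintype m] [DecidableEq m]
    [Fintype n] [DecidableEq n] (M : Matrix m n ℝ) (u : EuclideanSpace ℝ n)
    (v : EuclideanSpace ℝ m) :
    inner ℝ u (toEuclideanLin Mᵀ v) = inner ℝ (toEuclideanLin M u) v := by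
  rw [← conjTranspose_eq_transpose_of_trivial, toEuclideanLin_conjTranspose_eq_adjoint,
    LinearMap.adjoint_inner_right]

theorem HasGradientAt.comp_of_fderiv_eq_toEuclideanLin_transpose {n : Type*} [Fintype n]
    [DecidableEq n] {f : EuclideanSpace ℝ n → ℝ} {g : EuclideanSpace ℝ n}
    {A : EuclideanSpace ℝ n → EuclideanSpace ℝ n}
    {A' : EuclideanSpace ℝ n →L[ℝ] EuclideanSpace ℝ n} {J : Matrix n n ℝ}
    {x : EuclideanSpace ℝ n} (hf : HasGradientAt f g (A x)) (hA : HasFDerivAt A A' x)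
    (hA' : ∀ v, A' v = toEuclideanLin Jᵀ v) :
    HasGradientAt (fun y => f (A y)) (toEuclideanLin J g) x := by
  rw [hasGradientAt_iff_hasFDerivAt] at hf ⊢
  refine (hf.comp x hA).congr_fderiv (ContinuousLinearMap.ext fun v => ?_)
  simp [hA', inner_toEuclideanLin_transpose]

theorem hasFDerivAt_norm_sq_of_eq_zero {E F : Type*} [NormedAddCommGroup E] [NormedSpace ℝ E]
    [NormedAddCommGroup F] [InnerProductSpace ℝ F] {c : E → F} {x : E}
    (hc : DifferentiableAt ℝ c x) (hcx : c x = 0) :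
    HasFDerivAt (fun y => ‖c y‖ ^ 2) (0 : E →L[ℝ] ℝ) x := by
  simpa [hcx] using hc.hasFDerivAt.norm_sq

theorem stationary_of_OCP_is_stationary_of_CDF_general
    {n p : ℕ} (β : ℝ)
    (f : EuclideanSpace ℝ (Fin n) → ℝ) (hf : Differentiable ℝ f)
    (A : EuclideanSpace ℝ (Fin n) → EuclideanSpace ℝ (Fin n))
    (hA : Differentiable ℝ A)
    (c : EuclideanSpace ℝ (Fin n) → EuclideanSpace ℝ (Fin p))
    (hc : Differentiable ℝ c)
    (Ja : EuclideanSpace ℝ (Fin n) → Matrix (Fin n) (Fin n) ℝ)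
    (hJa : ∀ y (v : EuclideanSpace ℝ (Fin n)),
      fderiv ℝ A y v = Matrix.toEuclideanLin (Ja y)ᵀ v)
    (Jc : EuclideanSpace ℝ (Fin n) → Matrix (Fin n) (Fin p) ℝ)
    (x : EuclideanSpace ℝ (Fin n)) (lam : EuclideanSpace ℝ (Fin p))
    (hstat : gradient f x = Matrix.toEuclideanLin (Jc x) lam)
    (hfeas : c x = 0)
    (hAx : A x = x)
    (hJaJc : Ja x * Jc x = 0) :
    gradient (fun y => f (A y) + β / 2 * ‖c y‖ ^ 2) x = 0 := by
  have hgrad_f : HasGradientAt f (toEuclideanLin (Jc x) lam) (A x) := by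
    rw [hAx, ← hstat]
    exact (hf x).hasGradientAt
  have hgrad_fA : HasGradientAt (fun y => f (A y)) 0 x := by
    have h := hgrad_f.comp_of_fderiv_eq_toEuclideanLin_transpose (hA x).hasFDerivAt (hJa x)
    rwa [← LinearMap.comp_apply, ← Matrix.toLpLin_mul_same, hJaJc, map_zero,
      LinearMap.zero_apply] at h
  have hpenalty := (hasFDerivAt_norm_sq_of_eq_zero (hc x) hfeas).const_mul (β / 2)
  rw [hasGradientAt_iff_hasFDerivAt, map_zero] at hgrad_fA
  simpa using (hgrad_fA.fun_add hpenalty).hasGradientAt.gradient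

/-- a first-order stationary point of the constrained problem
(`∇f(x) = J_c(x) λ`, `c(x) = 0`) is a first-order stationary point of the
constraint dissolving function `h(y) = f(𝒜(y)) + β/2 ‖c(y)‖²`. -/
theorem stationary_of_OCP_is_stationary_of_CDF
    {n p : ℕ} (β : ℝ) (hβ : 0 < β)
    (f : EuclideanSpace ℝ (Fin n) → ℝ) (hf : Differentiable ℝ f)
    (A : EuclideanSpace ℝ (Fin n) → EuclideanSpace ℝ (Fin n))
    (hA : Differentiable ℝ A)
    (c : EuclideanSpace ℝ (Fin n) → EuclideanSpace ℝ (Fin p))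
    (hc : Differentiable ℝ c)
    (Ja : EuclideanSpace ℝ (Fin n) → Matrix (Fin n) (Fin n) ℝ)
    (hJa : ∀ y (v : EuclideanSpace ℝ (Fin n)),
      fderiv ℝ A y v = Matrix.toEuclideanLin (Ja y)ᵀ v)
    (Jc : EuclideanSpace ℝ (Fin n) → Matrix (Fin n) (Fin p) ℝ)
    (hJc : ∀ y (v : EuclideanSpace ℝ (Fin n)),
      fderiv ℝ c y v = Matrix.toEuclideanLin (Jc y)ᵀ v)
    (x : EuclideanSpace ℝ (Fin n)) (lam : EuclideanSpace ℝ (Fin p))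
    (hstat : gradient f x = Matrix.toEuclideanLin (Jc x) lam)
    (hfeas : c x = 0)
    (hAx : A x = x)
    (hJaJc : Ja x * Jc x = 0) :
    gradient (fun y => f (A y) + β / 2 * ‖c y‖ ^ 2) x = 0 :=
  stationary_of_OCP_is_stationary_of_CDF_general β f hf A hA c hc Ja hJa Jc x lam hstat hfeas hAx
    hJaJc
end

section
/- Let $x\in\mathcal{M}$ with $c(x)=0$ and $J_c(x)$ of full column rank, and suppose $\mathcal{A}$ satisfies $\mathcal{A}(x)=x$, $J_{\mathcal{A}}(x)J_c(x)=0$, and the null space of $J_{\mathcal{A}}(x)$ equals $\mathrm{range}(J_c(x))$. If $\nabla h(x)=0$ where $h(y)=f(\mathcal{A}(y))+\frac{\beta}{2}\|c(y)\|^2$, then $\nabla f(x) \in \mathrm{range}(J_c(x))$; i.e., $x$ is a first-order stationary point (KKT point) of $\min f$ subject to $c=0$. -/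
open Matrix InnerProductSpace

/-!
At a fixed point `x = 𝒜(x)` on the feasible set the penalty `β/2 ‖c‖²` is stationary (its
derivative `β ⟪c x, J_c ·⟫` vanishes with `c x`), so by the chain rule `∇h(x) = J_𝒜(x) ∇f(x)`.
Hence `∇h(x) = 0` puts `∇f(x)` in the null space of `J_𝒜(x)`, which is `range J_c(x)`.
-/

section Calculus

variable {E F G : Type*} [NormedAddCommGroup E] [NormedSpace ℝ E]
  [NormedAddCommGroup F] [InnerProductSpace ℝ F] [NormedAddCommGroup G] [NormedSpace ℝ G]

theorem HasFDerivAt.const_mul_norm_sq_of_eq_zero {c : E → F} {c' : E →L[ℝ] F} {x : E}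
    (hc : HasFDerivAt c c' x) (hcx : c x = 0) (β : ℝ) :
    HasFDerivAt (fun y => β * ‖c y‖ ^ 2) (0 : E →L[ℝ] ℝ) x := by
  simpa [hcx] using hc.norm_sq.const_mul β

theorem fderiv_comp_add_const_mul_norm_sq_of_eq_zero {f : G → ℝ} {A : E → G} {c : E → F}
    {x : E} (hf : DifferentiableAt ℝ f (A x)) (hA : DifferentiableAt ℝ A x)
    (hc : DifferentiableAt ℝ c x) (hcx : c x = 0) (β : ℝ) :
    fderiv ℝ (fun y => f (A y) + β * ‖c y‖ ^ 2) x = (fderiv ℝ f (A x)).comp (fderiv ℝ A x) :=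
  ((hf.hasFDerivAt.comp x hA.hasFDerivAt).add
    (HasFDerivAt.const_mul_norm_sq_of_eq_zero hc.hasFDerivAt hcx β)).fderiv.trans (add_zero _)

end Calculus

theorem gradient_eq_zero_iff {𝕜 F : Type*} [RCLike 𝕜] [NormedAddCommGroup F]
    [InnerProductSpace 𝕜 F] [CompleteSpace F] {f : F → 𝕜} {x : F} :
    gradient f x = 0 ↔ fderiv 𝕜 f x = 0 :=
  (toDual 𝕜 F).symm.map_eq_zero_iff

theorem Matrix.inner_toEuclideanLin_left {m n : Type*} [Fintype m] [Fintype n]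
    [DecidableEq m] [DecidableEq n] (M : Matrix m n ℝ) (v : EuclideanSpace ℝ n)
    (w : EuclideanSpace ℝ m) :
    inner ℝ (M.toEuclideanLin v) w = inner ℝ v (Mᵀ.toEuclideanLin w) := by
  rw [← conjTranspose_eq_transpose_of_trivial, toEuclideanLin_conjTranspose_eq_adjoint,
    LinearMap.adjoint_inner_right]

theorem Matrix.toEuclideanLin_eq_zero_of_forall_inner_transpose {m n : Type*} [Fintype m]
    [Fintype n] [DecidableEq m] [DecidableEq n] (M : Matrix m n ℝ) (v : EuclideanSpace ℝ n)
    (hv : ∀ w, inner ℝ v (Mᵀ.toEuclideanLin w) = 0) : M.toEuclideanLin v = 0 :=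
  ext_inner_right ℝ fun w => by simp [inner_toEuclideanLin_left, hv]

theorem stationary_of_CDF_is_KKT_general
    {n p : ℕ} (β : ℝ)
    (f : EuclideanSpace ℝ (Fin n) → ℝ) (hf : Differentiable ℝ f)
    (A : EuclideanSpace ℝ (Fin n) → EuclideanSpace ℝ (Fin n))
    (hA : Differentiable ℝ A)
    (c : EuclideanSpace ℝ (Fin n) → EuclideanSpace ℝ (Fin p))
    (hc : Differentiable ℝ c)
    (Ja : EuclideanSpace ℝ (Fin n) → Matrix (Fin n) (Fin n) ℝ)
    (hJa : ∀ y (v : EuclideanSpace ℝ (Fin n)),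
      fderiv ℝ A y v = Matrix.toEuclideanLin (Ja y)ᵀ v)
    (Jc : EuclideanSpace ℝ (Fin n) → Matrix (Fin n) (Fin p) ℝ)
    (x : EuclideanSpace ℝ (Fin n))
    (hfeas : c x = 0)
    (hAx : A x = x)
    (hnull : ∀ v : EuclideanSpace ℝ (Fin n),
      Matrix.toEuclideanLin (Ja x) v = 0 ↔
        ∃ u : EuclideanSpace ℝ (Fin p), v = Matrix.toEuclideanLin (Jc x) u)
    (hstat : gradient (fun y => f (A y) + β / 2 * ‖c y‖ ^ 2) x = 0) :
    ∃ lam : EuclideanSpace ℝ (Fin p),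
      gradient f x = Matrix.toEuclideanLin (Jc x) lam := by
  have hderiv := fderiv_comp_add_const_mul_norm_sq_of_eq_zero (hf (A x)) (hA x) (hc x) hfeas
    (β / 2)
  rw [gradient_eq_zero_iff.mp hstat, hAx] at hderiv
  have hortho : ∀ v, inner ℝ (gradient f x) ((Ja x)ᵀ.toEuclideanLin v) = 0 := fun v => by
    rw [inner_gradient_left, ← hJa, ← ContinuousLinearMap.comp_apply, ← hderiv,
      _root_.zero_apply]
  exact (hnull _).mp ((Ja x).toEuclideanLin_eq_zero_of_forall_inner_transpose _ hortho)

/-- at a feasible point `x` with LICQ where the null space of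
`J_𝒜(x)` equals `range(J_c(x))`, stationarity of the constraint dissolving
function `h` implies that `x` is a KKT point: `∇f(x) ∈ range(J_c(x))`. -/
theorem stationary_of_CDF_is_KKT
    {n p : ℕ} (β : ℝ) (hβ : 0 < β)
    (f : EuclideanSpace ℝ (Fin n) → ℝ) (hf : Differentiable ℝ f)
    (A : EuclideanSpace ℝ (Fin n) → EuclideanSpace ℝ (Fin n))
    (hA : Differentiable ℝ A)
    (c : EuclideanSpace ℝ (Fin n) → EuclideanSpace ℝ (Fin p))
    (hc : Differentiable ℝ c)
    (Ja : EuclideanSpace ℝ (Fin n) → Matrix (Fin n) (Fin n) ℝ)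
    (hJa : ∀ y (v : EuclideanSpace ℝ (Fin n)),
      fderiv ℝ A y v = Matrix.toEuclideanLin (Ja y)ᵀ v)
    (Jc : EuclideanSpace ℝ (Fin n) → Matrix (Fin n) (Fin p) ℝ)
    (hJc : ∀ y (v : EuclideanSpace ℝ (Fin n)),
      fderiv ℝ c y v = Matrix.toEuclideanLin (Jc y)ᵀ v)
    (x : EuclideanSpace ℝ (Fin n))
    (hfeas : c x = 0) (hrank : (Jc x).rank = p)
    (hAx : A x = x)
    (hJaJc : Ja x * Jc x = 0)
    (hnull : ∀ v : EuclideanSpace ℝ (Fin n),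
      Matrix.toEuclideanLin (Ja x) v = 0 ↔
        ∃ u : EuclideanSpace ℝ (Fin p), v = Matrix.toEuclideanLin (Jc x) u)
    (hstat : gradient (fun y => f (A y) + β / 2 * ‖c y‖ ^ 2) x = 0) :
    ∃ lam : EuclideanSpace ℝ (Fin p),
      gradient f x = Matrix.toEuclideanLin (Jc x) lam :=
  stationary_of_CDF_is_KKT_general β f hf A hA c hc Ja hJa Jc x hfeas hAx hnull hstat
end
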